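/- arXiv:1001.2994 — 5 statements merged into one kernel-verified Lean document; each statement's English description precedes it below -/
import Mathlib

section
/- Let d ≥ 1, let q, k ∈ (1,∞) with q − 1 < k, and set α := 1 − (q−1)/k. There exists a constant C = C(d,q,k) ∈ (0,∞) such that for all Borel probability measures f, g on ℝ^d with M_{k+1} < ∞ one has W_q(f,g) ≤ C · M_{k+1}^{1−α} · W_1(f,g)^α. -/
open MeasureTheory Filter
open scoped ENNReal BigOperators Topology

noncomputable section


/-- `ℝ^d` as a Euclidean space. -/
abbrev Euc (d : ℕ) : Type := EuclideanSpace ℝ (Fin d)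

/-- Transport cost `W_q(f,g) = inf_π ∫ |x-y|^q dπ` (no `q`-th root), valued in `ℝ≥0∞`. -/
def transportCost {d : ℕ} (q : ℝ) (f g : Measure (Euc d)) : ℝ≥0∞ :=
  ⨅ (π : Measure (Euc d × Euc d))
    (_ : π.map Prod.fst = f ∧ π.map Prod.snd = g),
      ∫⁻ p, ENNReal.ofReal (dist p.1 p.2 ^ q) ∂π

/-- `(k+1)`-moment `M_{k+1}(f) = ∫ (1+|x|^{k+1}) df`, valued in `ℝ≥0∞`. -/
def momentE {d : ℕ} (k : ℝ) (f : Measure (Euc d)) : ℝ≥0∞ :=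
  ∫⁻ x, ENNReal.ofReal (1 + ‖x‖ ^ k) ∂f

/-!
Write `q = (1 - β) · 1 + β · (k + 1)` with `β = (q - 1) / k = 1 - α`. For any coupling `π` of `f`
and `g`, Hölder's inequality interpolates `∫ |x - y|^q dπ` between `∫ |x - y| dπ` and
`∫ |x - y|^{k+1} dπ`, and the latter is at most `2^{k+1} M_{k+1}` because `π` has marginals `f`
and `g`. Hence `∫ |x - y|^q dπ ≤ 2^{(k+1)β} M_{k+1}^β (∫ |x - y| dπ)^{1-β}`, and taking the
infimum over `π` gives the theorem with `C = 2^{(k+1)β}`.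
-/

theorem ENNReal.lintegral_rpow_le_interpolate {α : Type*} [MeasurableSpace α] {μ : Measure α}
    {u : α → ℝ≥0∞} (hu : AEMeasurable u μ) {p₀ p₁ θ : ℝ} (hp₀ : 0 ≤ p₀) (hp₁ : 0 ≤ p₁)
    (hθ₀ : 0 ≤ θ) (hθ₁ : θ ≤ 1) :
    ∫⁻ a, u a ^ ((1 - θ) * p₀ + θ * p₁) ∂μ ≤
      (∫⁻ a, u a ^ p₀ ∂μ) ^ (1 - θ) * (∫⁻ a, u a ^ p₁ ∂μ) ^ θ := by
  have hsplit : ∀ a, u a ^ ((1 - θ) * p₀ + θ * p₁) = (u a ^ p₀) ^ (1 - θ) * (u a ^ p₁) ^ θ :=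
    fun a => by
      rw [ENNReal.rpow_add_of_nonneg _ _ (by nlinarith) (by positivity), ← ENNReal.rpow_mul,
        ← ENNReal.rpow_mul, mul_comm p₀, mul_comm p₁]
  simp_rw [hsplit]
  exact ENNReal.lintegral_mul_norm_pow_le (hu.pow_const p₀) (hu.pow_const p₁) (by linarith) hθ₀
    (by ring)

section Transport

variable {d : ℕ}

theorem one_le_momentE (p : ℝ) (f : Measure (Euc d)) [IsProbabilityMeasure f] :
    1 ≤ momentE p f :=
  calc 1 = ∫⁻ _, 1 ∂f := by simp
    _ ≤ momentE p f := lintegral_mono fun x =>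
      ENNReal.one_le_ofReal.2 (le_add_of_nonneg_right (by positivity))

theorem lintegral_enorm_rpow_le_momentE {p : ℝ} (hp : 0 ≤ p) (f : Measure (Euc d)) :
    ∫⁻ x, ‖x‖ₑ ^ p ∂f ≤ momentE p f := by
  refine lintegral_mono fun x => ?_
  rw [← ofReal_norm, ENNReal.ofReal_rpow_of_nonneg (norm_nonneg x) hp]
  exact ENNReal.ofReal_le_ofReal (by linarith)

theorem lintegral_edist_rpow_le_momentE {p : ℝ} (hp : 1 ≤ p) {f g : Measure (Euc d)}
    {π : Measure (Euc d × Euc d)} (hf : π.map Prod.fst = f) (hg : π.map Prod.snd = g) :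
    ∫⁻ z, edist z.1 z.2 ^ p ∂π ≤ 2 ^ p * max (momentE p f) (momentE p g) := by
  have hp₀ : 0 ≤ p := by linarith
  have hmeas : Measurable fun x : Euc d => ‖x‖ₑ ^ p := measurable_enorm.pow_const p
  have hpointwise : ∀ z : Euc d × Euc d,
      edist z.1 z.2 ^ p ≤ 2 ^ (p - 1) * (‖z.1‖ₑ ^ p + ‖z.2‖ₑ ^ p) := fun z =>
    calc edist z.1 z.2 ^ p ≤ (‖z.1‖ₑ + ‖z.2‖ₑ) ^ p := by
          gcongr
          exact (edist_eq_enorm_sub _ _).trans_le enorm_sub_le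
      _ ≤ _ := ENNReal.rpow_add_le_mul_rpow_add_rpow _ _ hp
  calc ∫⁻ z, edist z.1 z.2 ^ p ∂π
      ≤ ∫⁻ z, 2 ^ (p - 1) * (‖z.1‖ₑ ^ p + ‖z.2‖ₑ ^ p) ∂π := lintegral_mono hpointwise
    _ = 2 ^ (p - 1) * (∫⁻ x, ‖x‖ₑ ^ p ∂f + ∫⁻ y, ‖y‖ₑ ^ p ∂g) := by
      rw [lintegral_const_mul' _ _ (by simp),
        lintegral_add_left (f := fun z : Euc d × Euc d => ‖z.1‖ₑ ^ p) (hmeas.comp measurable_fst),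
        ← hf, ← hg, lintegral_map hmeas measurable_fst, lintegral_map hmeas measurable_snd]
    _ ≤ 2 ^ (p - 1) * (max (momentE p f) (momentE p g) + max (momentE p f) (momentE p g)) := by
      gcongr
      · exact (lintegral_enorm_rpow_le_momentE hp₀ f).trans (le_max_left _ _)
      · exact (lintegral_enorm_rpow_le_momentE hp₀ g).trans (le_max_right _ _)
    _ = 2 ^ p * max (momentE p f) (momentE p g) := by
      rw [← two_mul, ← mul_assoc]
      congr 1
      conv_rhs => rw [← sub_add_cancel p 1, ENNReal.rpow_add _ _ two_ne_zero ENNReal.ofNat_ne_top,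
        ENNReal.rpow_one]

theorem transportCost_eq_iInf_edist {q : ℝ} (hq : 0 ≤ q) (f g : Measure (Euc d)) :
    transportCost q f g = ⨅ (π : Measure (Euc d × Euc d))
      (_ : π.map Prod.fst = f ∧ π.map Prod.snd = g), ∫⁻ z, edist z.1 z.2 ^ q ∂π := by
  simp only [transportCost, edist_dist, ENNReal.ofReal_rpow_of_nonneg dist_nonneg hq]

theorem transportCost_le_mul_rpow_transportCost_one {q θ : ℝ} (hq : 0 ≤ q) (hθ : 0 < θ)
    {c : ℝ≥0∞} (hc₀ : c ≠ 0) (hc : c ≠ ∞) {f g : Measure (Euc d)}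
    (h : ∀ π : Measure (Euc d × Euc d), π.map Prod.fst = f → π.map Prod.snd = g →
      ∫⁻ z, edist z.1 z.2 ^ q ∂π ≤ c * (∫⁻ z, edist z.1 z.2 ∂π) ^ θ) :
    transportCost q f g ≤ c * transportCost 1 f g ^ θ := by
  have hrpow : ∀ x : ℝ≥0∞, x ^ θ = ENNReal.orderIsoRpow θ hθ x := fun _ => rfl
  rw [transportCost_eq_iInf_edist hq, transportCost_eq_iInf_edist zero_le_one]
  simp only [ENNReal.rpow_one, hrpow, OrderIso.map_iInf, ENNReal.mul_iInf_of_ne hc₀ hc]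
  exact iInf₂_mono fun π hπ => h π hπ.1 hπ.2

end Transport

theorem stmt0_general (d : ℕ) (q k : ℝ) (hq : 1 < q) (hqk : q - 1 < k) :
    ∃ C : ℝ, 0 < C ∧
      ∀ f g : Measure (Euc d), IsProbabilityMeasure f → IsProbabilityMeasure g →
        momentE (k + 1) f < ∞ → momentE (k + 1) g < ∞ →
        transportCost q f g ≤
          ENNReal.ofReal C * max (momentE (k + 1) f) (momentE (k + 1) g)
              ^ (1 - (1 - (q - 1) / k))
            * transportCost 1 f g ^ (1 - (q - 1) / k) := by
  have hk : 0 < k := by linarith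
  set β := (q - 1) / k with hβ
  have hβ₀ : 0 < β := div_pos (by linarith) hk
  have hβ₁ : β < 1 := (div_lt_one hk).2 hqk
  refine ⟨2 ^ ((k + 1) * β), by positivity, fun f g _ _ hMf hMg => ?_⟩
  set M := max (momentE (k + 1) f) (momentE (k + 1) g)
  have hM₁ : 1 ≤ M := (one_le_momentE _ f).trans (le_max_left _ _)
  have hM : M ≠ ∞ := (max_lt hMf hMg).ne
  rw [sub_sub_cancel]
  refine transportCost_le_mul_rpow_transportCost_one (by linarith) (by linarith)
    (mul_ne_zero (by positivity) (ENNReal.rpow_pos (zero_lt_one.trans_le hM₁) hM).ne')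
    (ENNReal.mul_ne_top ENNReal.ofReal_ne_top (ENNReal.rpow_ne_top_of_nonneg hβ₀.le hM))
    fun π hf hg => ?_
  have hq_eq : (1 - β) * 1 + β * (k + 1) = q := by rw [hβ]; field_simp; ring
  calc ∫⁻ z, edist z.1 z.2 ^ q ∂π
      = ∫⁻ z, edist z.1 z.2 ^ ((1 - β) * 1 + β * (k + 1)) ∂π := by rw [hq_eq]
    _ ≤ (∫⁻ z, edist z.1 z.2 ^ (1 : ℝ) ∂π) ^ (1 - β) * (∫⁻ z, edist z.1 z.2 ^ (k + 1) ∂π) ^ β :=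
      ENNReal.lintegral_rpow_le_interpolate measurable_edist.aemeasurable zero_le_one
        (by linarith) hβ₀.le hβ₁.le
    _ ≤ (∫⁻ z, edist z.1 z.2 ∂π) ^ (1 - β) * (2 ^ (k + 1) * M) ^ β := by
      simp only [ENNReal.rpow_one]
      gcongr
      exact lintegral_edist_rpow_le_momentE (by linarith) hf hg
    _ = ENNReal.ofReal (2 ^ ((k + 1) * β)) * M ^ β * (∫⁻ z, edist z.1 z.2 ∂π) ^ (1 - β) := by
      rw [ENNReal.mul_rpow_of_nonneg _ _ hβ₀.le, ← ENNReal.rpow_mul,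
        ← ENNReal.ofReal_rpow_of_pos two_pos, ENNReal.ofReal_ofNat]
      ring

theorem stmt0 (d : ℕ) (hd : 1 ≤ d) (q k : ℝ) (hq : 1 < q) (hk : 1 < k) (hqk : q - 1 < k) :
    ∃ C : ℝ, 0 < C ∧
      ∀ f g : Measure (Euc d), IsProbabilityMeasure f → IsProbabilityMeasure g →
        momentE (k + 1) f < ∞ → momentE (k + 1) g < ∞ →
        transportCost q f g ≤
          ENNReal.ofReal C * max (momentE (k + 1) f) (momentE (k + 1) g)
              ^ (1 - (1 - (q - 1) / k))
            * transportCost 1 f g ^ (1 - (q - 1) / k) :=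
  stmt0_general d q k hq hqk
end
end

section
/- Let d ≥ 1 and s ∈ (0,1]. For all Borel probability measures f, g on ℝ^d one has |f−g|_s ≤ 2^{1−s} · W_s(f,g) and W_s(f,g) ≤ W_1(f,g)^s. -/
open MeasureTheory Filter
open scoped ENNReal BigOperators Topology

noncomputable section


/-- Fourier transform of a measure: `f̂(ξ) = ∫ e^{-i v·ξ} df(v)`. -/
def fourierM {d : ℕ} (f : Measure (Euc d)) (ξ : Euc d) : ℂ :=
  ∫ v, Complex.exp (-(Complex.I * ((inner ℝ v ξ : ℝ) : ℂ))) ∂f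

/-- Toscani's Fourier-based distance `|f - g|_s`, valued in `ℝ≥0∞`. -/
def fourierDist {d : ℕ} (s : ℝ) (f g : Measure (Euc d)) : ℝ≥0∞ :=
  ⨆ (ξ : Euc d) (_ : ξ ≠ 0),
    ENNReal.ofReal (‖fourierM f ξ - fourierM g ξ‖ / ‖ξ‖ ^ s)

/-!
Given a coupling `π` of `f` and `g`, write `f̂(ξ) - ĝ(ξ) = ∫ (e^{-i x·ξ} - e^{-i y·ξ}) dπ(x, y)`.
The integrand has modulus at most `min 2 (|ξ| |x - y|) ≤ 2^{1-s} |ξ|^s |x - y|^s`, which gives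
the Fourier bound after taking the infimum over couplings. The second inequality is Jensen's
inequality for the concave map `t ↦ t^s` under the probability measure `π`.
-/

lemma norm_cexp_neg_I_mul_sub_le (a b : ℝ) :
    ‖Complex.exp (-(Complex.I * a)) - Complex.exp (-(Complex.I * b))‖ ≤ |a - b| := by
  have hfactor : Complex.exp (-(Complex.I * a)) - Complex.exp (-(Complex.I * b))
      = Complex.exp (-(Complex.I * b)) * (Complex.exp (Complex.I * ↑(b - a)) - 1) := by
    rw [mul_sub, ← Complex.exp_add]
    push_cast
    ring_nf
  rw [hfactor, norm_mul, Complex.norm_exp, abs_sub_comm]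
  simpa using Real.norm_exp_I_mul_ofReal_sub_one_le (x := b - a)

lemma min_two_le_two_rpow_mul_rpow {s t : ℝ} (hs : 0 < s) (hs1 : s ≤ 1) (ht : 0 ≤ t) :
    min 2 t ≤ 2 ^ (1 - s) * t ^ s := by
  rcases le_total t 2 with h | h
  · rw [min_eq_right h]
    calc t = t ^ (1 - s) * t ^ s := by
          rw [← Real.rpow_add' ht (by norm_num), sub_add_cancel, Real.rpow_one]
      _ ≤ 2 ^ (1 - s) * t ^ s := by gcongr
  · rw [min_eq_left h]
    calc (2 : ℝ) = 2 ^ (1 - s) * 2 ^ s := by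
          rw [← Real.rpow_add two_pos, sub_add_cancel, Real.rpow_one]
      _ ≤ 2 ^ (1 - s) * t ^ s := by gcongr

lemma norm_cexp_neg_inner_sub_le {V : Type*} [NormedAddCommGroup V] [InnerProductSpace ℝ V]
    {s : ℝ} (hs : 0 < s) (hs1 : s ≤ 1) (ξ v w : V) :
    ‖Complex.exp (-(Complex.I * ((inner ℝ v ξ : ℝ) : ℂ)))
        - Complex.exp (-(Complex.I * ((inner ℝ w ξ : ℝ) : ℂ)))‖
      ≤ 2 ^ (1 - s) * ‖ξ‖ ^ s * dist v w ^ s := by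
  have hinner : |inner ℝ v ξ - inner ℝ w ξ| ≤ dist v w * ‖ξ‖ := by
    rw [← inner_sub_left, dist_eq_norm]
    exact abs_real_inner_le_norm _ _
  calc _ ≤ min 2 (dist v w * ‖ξ‖) := by
        refine le_min ?_ ((norm_cexp_neg_I_mul_sub_le _ _).trans hinner)
        refine (norm_sub_le _ _).trans_eq ?_
        simp [Complex.norm_exp]
        norm_num
    _ ≤ 2 ^ (1 - s) * (dist v w * ‖ξ‖) ^ s := min_two_le_two_rpow_mul_rpow hs hs1 (by positivity)
    _ = 2 ^ (1 - s) * ‖ξ‖ ^ s * dist v w ^ s := by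
        rw [Real.mul_rpow dist_nonneg (norm_nonneg _)]
        ring

lemma enorm_fourierM_sub_le_of_coupling {d : ℕ} {s : ℝ} (hs : 0 < s) (hs1 : s ≤ 1)
    {f g : Measure (Euc d)} {π : Measure (Euc d × Euc d)} [IsFiniteMeasure π]
    (hπf : π.map Prod.fst = f) (hπg : π.map Prod.snd = g) (ξ : Euc d) :
    ‖fourierM f ξ - fourierM g ξ‖ₑ
      ≤ ENNReal.ofReal (2 ^ (1 - s) * ‖ξ‖ ^ s) * ∫⁻ p, ENNReal.ofReal (dist p.1 p.2 ^ s) ∂π := by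
  set E : Euc d → ℂ := fun v => Complex.exp (-(Complex.I * ((inner ℝ v ξ : ℝ) : ℂ)))
  have hE : Continuous E := by fun_prop
  have hnormE : ∀ v, ‖E v‖ ≤ 1 := fun v => by simp [E, Complex.norm_exp]
  have hint {φ : Euc d × Euc d → Euc d} (hφ : Continuous φ) : Integrable (fun p => E (φ p)) π :=
    .of_bound (hE.comp hφ).aestronglyMeasurable 1 (.of_forall fun p => hnormE _)
  have hfourier {φ : Euc d × Euc d → Euc d} (hφ : Measurable φ) :
      fourierM (π.map φ) ξ = ∫ p, E (φ p) ∂π :=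
    integral_map hφ.aemeasurable hE.aestronglyMeasurable
  calc ‖fourierM f ξ - fourierM g ξ‖ₑ = ‖∫ p, (E p.1 - E p.2) ∂π‖ₑ := by
        rw [← hπf, ← hπg, hfourier measurable_fst, hfourier measurable_snd,
          integral_sub (hint continuous_fst) (hint continuous_snd)]
    _ ≤ ∫⁻ p, ‖E p.1 - E p.2‖ₑ ∂π := enorm_integral_le_lintegral_enorm _
    _ ≤ ∫⁻ p, ENNReal.ofReal (2 ^ (1 - s) * ‖ξ‖ ^ s) * ENNReal.ofReal (dist p.1 p.2 ^ s) ∂π := by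
        refine lintegral_mono fun p => ?_
        rw [← ofReal_norm, ← ENNReal.ofReal_mul (by positivity)]
        exact ENNReal.ofReal_le_ofReal (norm_cexp_neg_inner_sub_le hs hs1 ξ p.1 p.2)
    _ = _ := lintegral_const_mul' _ _ ENNReal.ofReal_ne_top

theorem fourierDist_le_transportCost {d : ℕ} {s : ℝ} (hs : 0 < s) (hs1 : s ≤ 1)
    {f g : Measure (Euc d)} [IsFiniteMeasure f] :
    fourierDist s f g ≤ ENNReal.ofReal (2 ^ (1 - s)) * transportCost s f g := by
  have hc : ENNReal.ofReal (2 ^ (1 - s)) ≠ 0 := (ENNReal.ofReal_pos.mpr (by positivity)).ne'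
  simp only [fourierDist, transportCost, ENNReal.mul_iInf_of_ne hc ENNReal.ofReal_ne_top]
  refine iSup₂_le fun ξ hξ => le_iInf₂ fun π ⟨hπf, hπg⟩ => ?_
  have : IsFiniteMeasure (π.map Prod.fst) := hπf ▸ ‹IsFiniteMeasure f›
  have : IsFiniteMeasure π := Measure.isFiniteMeasure_of_map measurable_fst.aemeasurable
  have hξs : 0 < ‖ξ‖ ^ s := by positivity
  rw [ENNReal.ofReal_div_of_pos hξs, ofReal_norm]
  refine ENNReal.div_le_of_le_mul ((enorm_fourierM_sub_le_of_coupling hs hs1 hπf hπg ξ).trans_eq ?_)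
  rw [ENNReal.ofReal_mul (by positivity)]
  ring

lemma lintegral_rpow_le_rpow_lintegral {α : Type*} [MeasurableSpace α] {μ : Measure α}
    [IsProbabilityMeasure μ] {F : α → ℝ≥0∞} (hF : AEMeasurable F μ) {s : ℝ} (hs : 0 ≤ s)
    (hs1 : s ≤ 1) :
    ∫⁻ a, F a ^ s ∂μ ≤ (∫⁻ a, F a ∂μ) ^ s := by
  simpa using ENNReal.lintegral_mul_norm_pow_le hF (aemeasurable_const (b := 1)) hs
    (sub_nonneg.mpr hs1) (add_sub_cancel s 1)

theorem transportCost_le_transportCost_one_rpow {d : ℕ} {s : ℝ} (hs : 0 < s) (hs1 : s ≤ 1)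
    {f g : Measure (Euc d)} [IsProbabilityMeasure f] :
    transportCost s f g ≤ transportCost 1 f g ^ s := by
  have hcoupling : ∀ π : Measure (Euc d × Euc d), π.map Prod.fst = f ∧ π.map Prod.snd = g →
      ∫⁻ p, ENNReal.ofReal (dist p.1 p.2 ^ s) ∂π
        ≤ (∫⁻ p, ENNReal.ofReal (dist p.1 p.2 ^ (1 : ℝ)) ∂π) ^ s := by
    rintro π ⟨hπf, -⟩
    have : IsProbabilityMeasure (π.map Prod.fst) := hπf ▸ ‹IsProbabilityMeasure f›
    have : IsProbabilityMeasure π := Measure.isProbabilityMeasure_of_map Prod.fst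
    simp_rw [← ENNReal.ofReal_rpow_of_nonneg dist_nonneg hs.le, Real.rpow_one]
    exact lintegral_rpow_le_rpow_lintegral (by fun_prop) hs.le hs1
  calc transportCost s f g ≤ ⨅ (π : Measure (Euc d × Euc d))
        (_ : π.map Prod.fst = f ∧ π.map Prod.snd = g),
          (∫⁻ p, ENNReal.ofReal (dist p.1 p.2 ^ (1 : ℝ)) ∂π) ^ s := iInf₂_mono hcoupling
    _ = transportCost 1 f g ^ s := by
        simp only [transportCost, ← ENNReal.orderIsoRpow_apply s hs, OrderIso.map_iInf]

theorem stmt1_general (d : ℕ) (s : ℝ) (hs : 0 < s) (hs1 : s ≤ 1)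
    (f g : Measure (Euc d)) (hf : IsProbabilityMeasure f) :
    fourierDist s f g ≤ ENNReal.ofReal (2 ^ (1 - s)) * transportCost s f g ∧
      transportCost s f g ≤ transportCost 1 f g ^ s :=
  ⟨fourierDist_le_transportCost hs hs1, transportCost_le_transportCost_one_rpow hs hs1⟩

theorem stmt1 (d : ℕ) (hd : 1 ≤ d) (s : ℝ) (hs : 0 < s) (hs1 : s ≤ 1)
    (f g : Measure (Euc d)) (hf : IsProbabilityMeasure f) (hg : IsProbabilityMeasure g) :
    fourierDist s f g ≤ ENNReal.ofReal (2 ^ (1 - s)) * transportCost s f g ∧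
      transportCost s f g ≤ transportCost 1 f g ^ s :=
  stmt1_general d s hs hs1 f g hf
end
end

section
/- Let d ≥ 1 and s ∈ (d/2, d/2+1). There exists a constant C = C(d,s) ∈ (0,∞) such that for all Borel probability measures f, g on ℝ^d with |f−g|_1 < ∞ one has ‖f−g‖²_{Ḣ^{−s}} ≤ C · |f−g|_1^{2s−d}. -/
open MeasureTheory Filter
open scoped ENNReal BigOperators Topology

noncomputable section


/-- Squared homogeneous negative Sobolev norm `‖f-g‖²_{Ḣ^{-s}}`, valued in `ℝ≥0∞`. -/
def homSobSq {d : ℕ} (s : ℝ) (f g : Measure (Euc d)) : ℝ≥0∞ :=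
  ∫⁻ ξ, ENNReal.ofReal (‖fourierM f ξ - fourierM g ξ‖ ^ 2 / ‖ξ‖ ^ (2 * s))

/-! With `D = |f - g|_1` one has `|f̂ ξ - ĝ ξ| ≤ min 2 (D |ξ|)`, the bound `2` coming from `f` and `g`
being probability measures. So the integrand of `‖f - g‖²_{Ḣ^{-s}}` is dominated by
`min 2 (D |ξ|)² / |ξ|^{2s}`, and the substitution `η = D ξ` turns its integral into `D^{2s-d}` times
`∫ min 2 |η|² / |η|^{2s} dη`. The latter is finite: near `0` the integrand is `|η|^{2-2s}` with
`2s - 2 < d`, near infinity it is `4 |η|^{-2s}` with `2s > d`. -/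

open Set Module

section Envelope

variable {E : Type*} [NormedAddCommGroup E] [NormedSpace ℝ E]

def sobolevEnvelope (s D : ℝ) (ξ : E) : ℝ :=
  min 2 (D * ‖ξ‖) ^ 2 / ‖ξ‖ ^ (2 * s)

lemma sobolevEnvelope_eq_rpow_mul_smul (s : ℝ) {D : ℝ} (hD : 0 < D) (ξ : E) :
    sobolevEnvelope s D ξ = D ^ (2 * s) * sobolevEnvelope s 1 (D • ξ) := by
  rw [sobolevEnvelope, sobolevEnvelope, norm_smul, Real.norm_of_nonneg hD.le, one_mul,
    Real.mul_rpow hD.le (norm_nonneg ξ), mul_div_assoc', mul_div_mul_left _ _ (by positivity)]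

variable [FiniteDimensional ℝ E] [MeasurableSpace E] [BorelSpace E]
  (μ : Measure E) [μ.IsAddHaarMeasure]

lemma lintegral_comp_smul_addHaar (f : E → ℝ≥0∞) {R : ℝ} (hR : R ≠ 0) :
    ∫⁻ x, f (R • x) ∂μ = ENNReal.ofReal |(R ^ finrank ℝ E)⁻¹| * ∫⁻ x, f x ∂μ := by
  rw [← smul_eq_mul, ← lintegral_smul_measure, ← Measure.map_addHaar_smul μ hR]
  exact (lintegral_map_equiv f
    (Homeomorph.smul (isUnit_iff_ne_zero.2 hR).unit).toMeasurableEquiv).symm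

lemma lintegral_sobolevEnvelope {s D : ℝ} (hD : 0 ≤ D) (hs : (finrank ℝ E : ℝ) < 2 * s) :
    ∫⁻ ξ, ENNReal.ofReal (sobolevEnvelope s D ξ) ∂μ =
      ENNReal.ofReal D ^ (2 * s - finrank ℝ E) *
        ∫⁻ ξ, ENNReal.ofReal (sobolevEnvelope s 1 ξ) ∂μ := by
  rcases hD.eq_or_lt with rfl | hD
  · rw [ENNReal.ofReal_zero, ENNReal.zero_rpow_of_pos (sub_pos.2 hs), zero_mul]
    simp [sobolevEnvelope]
  simp_rw [sobolevEnvelope_eq_rpow_mul_smul s hD, ENNReal.ofReal_mul (Real.rpow_nonneg hD.le _)]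
  rw [lintegral_const_mul' _ _ ENNReal.ofReal_ne_top,
    lintegral_comp_smul_addHaar μ (fun η => ENNReal.ofReal (sobolevEnvelope s 1 η)) hD.ne',
    ← mul_assoc, ← ENNReal.ofReal_mul (by positivity), ENNReal.ofReal_rpow_of_pos hD,
    abs_of_pos (by positivity), ← Real.rpow_natCast, ← Real.rpow_neg hD.le,
    ← Real.rpow_add hD, ← sub_eq_add_neg]

lemma integrable_sobolevEnvelope_one [Nontrivial E] {s : ℝ} (hs : (finrank ℝ E : ℝ) / 2 < s)
    (hs' : s < (finrank ℝ E : ℝ) / 2 + 1) :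
    Integrable (sobolevEnvelope s 1) μ := by
  have hpred (y : ℝ) : y ^ (finrank ℝ E - 1) = y ^ ((finrank ℝ E : ℝ) - 1) := by
    rw [← Real.rpow_natCast, Nat.cast_pred finrank_pos]
  refine (integrable_fun_norm_addHaar μ (f := fun y => min 2 (1 * y) ^ 2 / y ^ (2 * s))).2 ?_
  rw [← Ioc_union_Ioi_eq_Ioi zero_le_two, integrableOn_union]
  constructor
  · have hpow : IntegrableOn (fun y : ℝ => y ^ ((finrank ℝ E : ℝ) + 1 - 2 * s)) (Ioc 0 2) :=
      (intervalIntegrable_iff_integrableOn_Ioc_of_le zero_le_two).1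
        (intervalIntegral.intervalIntegrable_rpow' (by linarith))
    refine hpow.congr_fun (fun y ⟨hy, hy2⟩ => ?_) measurableSet_Ioc
    rw [one_mul, min_eq_right hy2, smul_eq_mul, hpred y, ← Real.rpow_two, ← mul_div_assoc,
      ← Real.rpow_add hy, ← Real.rpow_sub hy]
    ring_nf
  · have hpow : IntegrableOn (fun y : ℝ => 4 * y ^ ((finrank ℝ E : ℝ) - 1 - 2 * s)) (Ioi 2) :=
      (integrableOn_Ioi_rpow_of_lt (by linarith) two_pos).const_mul 4
    refine hpow.congr_fun (fun y (hy : 2 < y) => ?_) measurableSet_Ioi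
    beta_reduce
    rw [one_mul, min_eq_left hy.le, smul_eq_mul, hpred y,
      Real.rpow_sub (two_pos.trans hy) ((finrank ℝ E : ℝ) - 1)]
    ring

end Envelope

lemma norm_fourierM_le_one {d : ℕ} (f : Measure (Euc d)) [IsProbabilityMeasure f] (ξ : Euc d) :
    ‖fourierM f ξ‖ ≤ 1 := by
  refine (norm_integral_le_integral_norm _).trans (le_of_eq ?_)
  simp [Complex.norm_exp]

lemma norm_fourierM_sub_le {d : ℕ} {f g : Measure (Euc d)} (hfin : fourierDist 1 f g ≠ ∞)
    {ξ : Euc d} (hξ : ξ ≠ 0) :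
    ‖fourierM f ξ - fourierM g ξ‖ ≤ (fourierDist 1 f g).toReal * ‖ξ‖ := by
  have h : ENNReal.ofReal (‖fourierM f ξ - fourierM g ξ‖ / ‖ξ‖ ^ (1 : ℝ)) ≤ fourierDist 1 f g :=
    le_iSup₂ (f := fun (ξ : Euc d) (_ : ξ ≠ 0) =>
      ENNReal.ofReal (‖fourierM f ξ - fourierM g ξ‖ / ‖ξ‖ ^ (1 : ℝ))) ξ hξ
  rw [Real.rpow_one, ENNReal.ofReal_le_iff_le_toReal hfin] at h
  exact (div_le_iff₀ (norm_pos_iff.2 hξ)).1 h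

lemma fourierM_zero {d : ℕ} (f : Measure (Euc d)) [IsProbabilityMeasure f] :
    fourierM f 0 = 1 := by
  simp [fourierM]

lemma norm_fourierM_sub_le_min {d : ℕ} {f g : Measure (Euc d)} [IsProbabilityMeasure f]
    [IsProbabilityMeasure g] (hfin : fourierDist 1 f g ≠ ∞) (ξ : Euc d) :
    ‖fourierM f ξ - fourierM g ξ‖ ≤ min 2 ((fourierDist 1 f g).toReal * ‖ξ‖) := by
  rcases eq_or_ne ξ 0 with rfl | hξ
  · simp [fourierM_zero]
  refine le_min ((norm_sub_le _ _).trans ?_) (norm_fourierM_sub_le hfin hξ)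
  linarith [norm_fourierM_le_one f ξ, norm_fourierM_le_one g ξ]

lemma homSobSq_le_lintegral_sobolevEnvelope {d : ℕ} (s : ℝ) {f g : Measure (Euc d)}
    [IsProbabilityMeasure f] [IsProbabilityMeasure g] (hfin : fourierDist 1 f g ≠ ∞) :
    homSobSq s f g ≤
      ∫⁻ ξ : Euc d, ENNReal.ofReal (sobolevEnvelope s (fourierDist 1 f g).toReal ξ) := by
  refine lintegral_mono fun ξ => ENNReal.ofReal_le_ofReal ?_
  unfold sobolevEnvelope
  gcongr
  exact norm_fourierM_sub_le_min hfin ξ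

theorem stmt2 (d : ℕ) (hd : 1 ≤ d) (s : ℝ) (hs : (d : ℝ) / 2 < s) (hs' : s < (d : ℝ) / 2 + 1) :
    ∃ C : ℝ, 0 < C ∧
      ∀ f g : Measure (Euc d), IsProbabilityMeasure f → IsProbabilityMeasure g →
        fourierDist 1 f g < ∞ →
        homSobSq s f g ≤ ENNReal.ofReal C * fourierDist 1 f g ^ (2 * s - d) := by
  have : Nontrivial (Euc d) :=
    nontrivial_of_finrank_pos (R := ℝ) (by rwa [finrank_euclideanSpace_fin])
  have hdim : (finrank ℝ (Euc d) : ℝ) = d := by simp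
  set I := ∫⁻ ξ : Euc d, ENNReal.ofReal (sobolevEnvelope s 1 ξ)
  have hI : I < ∞ :=
    (integrable_sobolevEnvelope_one volume (by rwa [hdim]) (by rwa [hdim])).lintegral_lt_top
  refine ⟨I.toReal + 1, by positivity, fun f g _ _ hfin => ?_⟩
  calc homSobSq s f g
      ≤ ∫⁻ ξ, ENNReal.ofReal (sobolevEnvelope s (fourierDist 1 f g).toReal ξ) :=
        homSobSq_le_lintegral_sobolevEnvelope s hfin.ne
    _ = fourierDist 1 f g ^ (2 * s - d) * I := by
        rw [lintegral_sobolevEnvelope volume ENNReal.toReal_nonneg (by rw [hdim]; linarith), hdim,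
          ENNReal.ofReal_toReal hfin.ne]
    _ ≤ ENNReal.ofReal (I.toReal + 1) * fourierDist 1 f g ^ (2 * s - d) := by
        rw [mul_comm]
        gcongr
        rw [ENNReal.le_ofReal_iff_toReal_le hI.ne (by positivity)]
        linarith
end
end

section
/- Let E be a set (or a measurable space), ℓ, N natural numbers with N ≥ 2ℓ ≥ 2, and φ : E^ℓ → ℝ a bounded function. Then for every V = (v_1,…,v_N) ∈ E^N, | (1/N!) Σ_{σ ∈ S_N} φ(v_{σ(1)},…,v_{σ(ℓ)}) − N^{−ℓ} Σ_{(i_1,…,i_ℓ) ∈ {1,…,N}^ℓ} φ(v_{i_1},…,v_{i_ℓ}) | ≤ 2ℓ²‖φ‖_∞/N, where S_N is the symmetric group on N letters and ‖φ‖_∞ = sup |φ|. -/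
/-!
Permutations act transitively on the embeddings `Fin ℓ ↪ Fin N`, so the permutation average is
the uniform average of `φ (V ∘ g)` over injective `g`. The injective maps form the fraction
`N.descFactorial ℓ / N ^ ℓ ≥ (1 - (ℓ - 1) / N) ^ ℓ ≥ 1 - ℓ (ℓ - 1) / N` (Bernoulli) of all maps,
and averages of a function bounded by `B` over two nested sets differ by at most `2 B` times the
proportion of the larger set not covered by the smaller one.
-/

open Finset

theorem MulAction.card_nsmul_sum_smul {G X M : Type*} [Group G] [Fintype G] [MulAction G X]
    [Fintype X] [MulAction.IsPretransitive G X] [AddCommMonoid M] (f : X → M) (x : X) :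
    Fintype.card X • ∑ g : G, f (g • x) = Fintype.card G • ∑ y, f y := by
  have orbit_sum_eq : ∀ y, ∑ g : G, f (g • x) = ∑ g : G, f (g • y) := by
    intro y
    obtain ⟨h, rfl⟩ := MulAction.exists_smul_eq G x y
    simpa only [Equiv.coe_mulRight, mul_smul] using
      (Equiv.sum_comp (Equiv.mulRight h) (fun g => f (g • x))).symm
  calc Fintype.card X • ∑ g : G, f (g • x) = ∑ y, ∑ g : G, f (g • y) := by
        rw [← card_univ, ← sum_const]
        exact sum_congr rfl fun y _ => orbit_sum_eq y
    _ = ∑ g : G, ∑ y, f (g • y) := sum_comm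
    _ = ∑ _g : G, ∑ y, f y := sum_congr rfl fun g _ => Equiv.sum_comp (MulAction.toPerm g) f
    _ = Fintype.card G • ∑ y, f y := by rw [sum_const, card_univ]

theorem MulAction.inv_card_mul_sum_smul {G X K : Type*} [Group G] [Fintype G] [MulAction G X]
    [Fintype X] [MulAction.IsPretransitive G X] [Field K] [CharZero K] (f : X → K) (x : X) :
    (Fintype.card G : K)⁻¹ * ∑ g : G, f (g • x) = (Fintype.card X : K)⁻¹ * ∑ y, f y := by
  have : Nonempty X := ⟨x⟩
  have hX : (Fintype.card X : K) ≠ 0 := Nat.cast_ne_zero.2 Fintype.card_ne_zero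
  have hG : (Fintype.card G : K) ≠ 0 := Nat.cast_ne_zero.2 Fintype.card_ne_zero
  have h := MulAction.card_nsmul_sum_smul (G := G) f x
  rw [nsmul_eq_mul, nsmul_eq_mul] at h
  field_simp
  linear_combination h

theorem abs_inv_card_mul_sum_sub_inv_card_mul_sum_le {X : Type*} [DecidableEq X]
    {s t : Finset X} (hst : s ⊆ t) (hs : s.Nonempty) {f : X → ℝ} {B : ℝ}
    (hB : ∀ x ∈ t, |f x| ≤ B) :
    |(#s : ℝ)⁻¹ * ∑ x ∈ s, f x - (#t : ℝ)⁻¹ * ∑ x ∈ t, f x| ≤ 2 * B * (1 - #s / #t) := by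
  have abs_sum_le : ∀ u ⊆ t, |∑ x ∈ u, f x| ≤ #u * B := fun u hu =>
    (abs_sum_le_sum_abs _ _).trans <| by simpa using sum_le_sum fun x hx => hB x (hu hx)
  have hs_pos : (0 : ℝ) < #s := by exact_mod_cast hs.card_pos
  have hst' : (#s : ℝ) ≤ #t := by exact_mod_cast card_le_card hst
  have ht_pos : (0 : ℝ) < #t := hs_pos.trans_le hst'
  have hcoef : 0 ≤ (#s : ℝ)⁻¹ - (#t : ℝ)⁻¹ := sub_nonneg.2 (inv_anti₀ hs_pos hst')
  have hsum_s := abs_sum_le s hst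
  have hsum_rest := abs_sum_le (t \ s) sdiff_subset
  rw [card_sdiff_of_subset hst, Nat.cast_sub (card_le_card hst)] at hsum_rest
  rw [← sum_sdiff hst]
  set a := ∑ x ∈ s, f x
  set r := ∑ x ∈ t \ s, f x
  calc |(#s : ℝ)⁻¹ * a - (#t : ℝ)⁻¹ * (r + a)|
      = |((#s : ℝ)⁻¹ - (#t : ℝ)⁻¹) * a - (#t : ℝ)⁻¹ * r| := by ring_nf
    _ ≤ ((#s : ℝ)⁻¹ - (#t : ℝ)⁻¹) * |a| + (#t : ℝ)⁻¹ * |r| := by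
        refine (abs_sub _ _).trans ?_
        rw [abs_mul, abs_mul, abs_of_nonneg hcoef, abs_of_pos (inv_pos.2 ht_pos)]
    _ ≤ ((#s : ℝ)⁻¹ - (#t : ℝ)⁻¹) * (#s * B) + (#t : ℝ)⁻¹ * ((#t - #s) * B) := by gcongr
    _ = 2 * B * (1 - #s / #t) := by field_simp; ring

theorem one_sub_descFactorial_div_pow_le {N ℓ : ℕ} (hℓN : ℓ ≤ N) :
    1 - (N.descFactorial ℓ : ℝ) / N ^ ℓ ≤ ℓ * (ℓ - 1) / N := by
  rcases Nat.eq_zero_or_pos N with rfl | hN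
  · simp [Nat.le_zero.1 hℓN]
  have hN' : (0 : ℝ) < N := by exact_mod_cast hN
  have hbase : ((N + 1 - ℓ : ℕ) : ℝ) = N * (1 + (1 - ℓ) / N) := by
    rw [Nat.cast_sub (by omega)]; push_cast; field_simp; ring
  have bernoulli : 1 + ℓ * ((1 - ℓ) / N : ℝ) ≤ (1 + (1 - ℓ) / N) ^ ℓ := by
    refine one_add_mul_le_pow ?_ ℓ
    rw [le_div_iff₀ hN']
    have : (ℓ : ℝ) ≤ N := by exact_mod_cast hℓN
    linarith
  have hdesc : (N : ℝ) ^ ℓ * (1 + (1 - ℓ) / N) ^ ℓ ≤ N.descFactorial ℓ := by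
    rw [← mul_pow, ← hbase]; exact_mod_cast Nat.pow_sub_le_descFactorial N ℓ
  rw [sub_le_comm, le_div_iff₀ (by positivity)]
  calc (1 - ℓ * (ℓ - 1) / N : ℝ) * N ^ ℓ = N ^ ℓ * (1 + ℓ * ((1 - ℓ) / N)) := by ring
    _ ≤ N ^ ℓ * (1 + (1 - ℓ) / N) ^ ℓ := by gcongr
    _ ≤ N.descFactorial ℓ := hdesc

theorem stmt10 {E : Type*} (ℓ N : ℕ) (hN : 2 * ℓ ≤ N)
    (φ : (Fin ℓ → E) → ℝ) (B : ℝ) (hB : ∀ x, |φ x| ≤ B) (V : Fin N → E) :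
    |(N.factorial : ℝ)⁻¹
        * ∑ σ : Equiv.Perm (Fin N), φ (fun i => V (σ (Fin.castLE (by omega) i)))
      - ((N : ℝ) ^ ℓ)⁻¹ * ∑ g : Fin ℓ → Fin N, φ (fun i => V (g i))|
      ≤ 2 * (ℓ : ℝ) ^ 2 * B / N := by
  have hℓN : ℓ ≤ N := by omega
  set ψ : (Fin ℓ → Fin N) → ℝ := fun g => φ (fun i => V (g i))
  set s := (univ : Finset (Fin ℓ ↪ Fin N)).map ⟨(⇑), DFunLike.coe_injective⟩
  have hs : #s = N.descFactorial ℓ := by simp [s, Fintype.card_embedding_eq]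
  have hperm : (N.factorial : ℝ)⁻¹ * ∑ σ : Equiv.Perm (Fin N), ψ (σ ∘ Fin.castLE hℓN) =
      (#s : ℝ)⁻¹ * ∑ g ∈ s, ψ g := by
    rw [card_map, sum_map, card_univ]
    have := Equiv.Perm.isMultiplyPretransitive (Fin N) ℓ
    have h := MulAction.inv_card_mul_sum_smul (G := Equiv.Perm (Fin N))
      (fun e : Fin ℓ ↪ Fin N => ψ e) (Fin.castLEEmb hℓN)
    rwa [Fintype.card_perm, Fintype.card_fin] at h
  have hB0 : 0 ≤ B := (abs_nonneg _).trans (hB fun i => V (Fin.castLE hℓN i))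
  calc _ = |(#s : ℝ)⁻¹ * ∑ g ∈ s, ψ g
          - (#(univ : Finset (Fin ℓ → Fin N)) : ℝ)⁻¹ * ∑ g, ψ g| := by
        rw [← hperm]; simp [ψ]
    _ ≤ 2 * B * (1 - #s / #(univ : Finset (Fin ℓ → Fin N))) :=
        abs_inv_card_mul_sum_sub_inv_card_mul_sum_le (subset_univ s)
          ⟨_, mem_map_of_mem _ (mem_univ (Fin.castLEEmb hℓN))⟩ fun g _ => hB _
    _ = 2 * B * (1 - N.descFactorial ℓ / N ^ ℓ) := by simp [hs]
    _ ≤ 2 * B * (ℓ * (ℓ - 1) / N) := by gcongr; exact one_sub_descFactorial_div_pow_le hℓN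
    _ ≤ 2 * (ℓ : ℝ) ^ 2 * B / N := by
        rw [mul_div_assoc']
        gcongr ?_ / _
        nlinarith [mul_nonneg hB0 (Nat.cast_nonneg ℓ : (0 : ℝ) ≤ ℓ)]
end

section
/- Let E be a measurable space, ℓ ≥ 1, and φ₁,…,φ_ℓ : E → ℝ bounded measurable functions. For Borel probability measures f₁, f₂ on E set R(f) := ∏_{i=1}^ℓ ⟨f, φ_i⟩ and DR[f₁](h) := Σ_{i=1}^ℓ ( ∏_{j≠i} ⟨f₁, φ_j⟩ ) ⟨h, φ_i⟩ for a finite signed measure h. Then (i) |R(f₂) − R(f₁)| ≤ ℓ (∏_{i=1}^ℓ ‖φ_i‖_∞) ‖f₂ − f₁‖_{TV}, and (ii) |R(f₂) − R(f₁) − DR[f₁](f₂ − f₁)| ≤ (ℓ(ℓ−1)/2) (∏_{i=1}^ℓ ‖φ_i‖_∞) ‖f₂ − f₁‖²_{TV}. -/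
/-!
The difference `∫ φ ∂f₂ - ∫ φ ∂f₁` is the integral of `φ` against the signed measure `f₂ - f₁`,
so it is bounded by `B ‖f₂ - f₁‖_TV`. Both estimates then follow from bounds on perturbed
products, proved by splitting off one factor at a time:
`a·P - b·Q = (a - b)·P + b·(P - Q)`.
-/

open MeasureTheory

section ProductPerturbation

variable {ι R : Type*} [DecidableEq ι]

theorem sum_prod_erase_mul_insert [CommSemiring R] {s : Finset ι} {k : ι} (hk : k ∉ s)
    (b c : ι → R) :
    ∑ i ∈ insert k s, (∏ j ∈ (insert k s).erase i, b j) * c i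
      = (∏ j ∈ s, b j) * c k + b k * ∑ i ∈ s, (∏ j ∈ s.erase i, b j) * c i := by
  rw [Finset.sum_insert hk, Finset.erase_insert hk, Finset.mul_sum]
  congr 1
  refine Finset.sum_congr rfl fun i hi => ?_
  have hki : k ≠ i := fun h => hk (h ▸ hi)
  rw [Finset.erase_insert_of_ne hki,
    Finset.prod_insert fun h => hk (Finset.mem_of_mem_erase h)]
  ring

variable [NormedCommRing R] [NormOneClass R] {a b : ι → R} {B : ι → ℝ} {δ : ℝ}

theorem norm_prod_sub_prod_le {s : Finset ι}
    (ha : ∀ i ∈ s, ‖a i‖ ≤ B i) (hb : ∀ i ∈ s, ‖b i‖ ≤ B i)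
    (hab : ∀ i ∈ s, ‖a i - b i‖ ≤ B i * δ) :
    ‖(∏ i ∈ s, a i) - ∏ i ∈ s, b i‖ ≤ s.card * (∏ i ∈ s, B i) * δ := by
  induction s using Finset.induction_on with
  | empty => simp
  | @insert k s hk ih =>
    simp only [Finset.forall_mem_insert] at ha hb hab
    have hprod_a : ‖∏ i ∈ s, a i‖ ≤ ∏ i ∈ s, B i :=
      (Finset.norm_prod_le _ _).trans (Finset.prod_le_prod (fun _ _ => norm_nonneg _) ha.2)
    have ih := ih ha.2 hb.2 hab.2
    rw [Finset.prod_insert hk, Finset.prod_insert hk, Finset.prod_insert hk,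
      Finset.card_insert_of_notMem hk]
    calc ‖a k * ∏ i ∈ s, a i - b k * ∏ i ∈ s, b i‖
        = ‖(a k - b k) * ∏ i ∈ s, a i + b k * ((∏ i ∈ s, a i) - ∏ i ∈ s, b i)‖ := by
          congr 1; ring
      _ ≤ B k * δ * ∏ i ∈ s, B i + B k * (s.card * (∏ i ∈ s, B i) * δ) := by
          refine (norm_add_le _ _).trans (add_le_add ?_ ?_) <;> refine (norm_mul_le _ _).trans ?_
          · exact mul_le_mul hab.1 hprod_a (norm_nonneg _) ((norm_nonneg _).trans hab.1)
          · exact mul_le_mul hb.1 ih (norm_nonneg _) ((norm_nonneg _).trans hb.1)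
      _ = ↑(s.card + 1) * (B k * ∏ i ∈ s, B i) * δ := by push_cast; ring

theorem norm_prod_sub_prod_sub_sum_le {s : Finset ι}
    (ha : ∀ i ∈ s, ‖a i‖ ≤ B i) (hb : ∀ i ∈ s, ‖b i‖ ≤ B i)
    (hab : ∀ i ∈ s, ‖a i - b i‖ ≤ B i * δ) :
    ‖(∏ i ∈ s, a i) - (∏ i ∈ s, b i) - ∑ i ∈ s, (∏ j ∈ s.erase i, b j) * (a i - b i)‖
      ≤ (s.card * (s.card - 1) / 2) * (∏ i ∈ s, B i) * δ ^ 2 := by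
  induction s using Finset.induction_on with
  | empty => simp
  | @insert k s hk ih =>
    have hfirst := norm_prod_sub_prod_le (fun i hi => ha i (Finset.mem_insert_of_mem hi))
      (fun i hi => hb i (Finset.mem_insert_of_mem hi))
      (fun i hi => hab i (Finset.mem_insert_of_mem hi))
    simp only [Finset.forall_mem_insert] at ha hb hab
    have ih := ih ha.2 hb.2 hab.2
    rw [sum_prod_erase_mul_insert hk, Finset.prod_insert hk, Finset.prod_insert hk,
      Finset.prod_insert hk, Finset.card_insert_of_notMem hk]
    set Pa := ∏ i ∈ s, a i
    set Pb := ∏ i ∈ s, b i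
    set D := ∑ i ∈ s, (∏ j ∈ s.erase i, b j) * (a i - b i)
    calc ‖a k * Pa - b k * Pb - (Pb * (a k - b k) + b k * D)‖
        = ‖(a k - b k) * (Pa - Pb) + b k * (Pa - Pb - D)‖ := by congr 1; ring
      _ ≤ B k * δ * (s.card * (∏ i ∈ s, B i) * δ)
          + B k * ((s.card * (s.card - 1) / 2) * (∏ i ∈ s, B i) * δ ^ 2) := by
          refine (norm_add_le _ _).trans (add_le_add ?_ ?_) <;> refine (norm_mul_le _ _).trans ?_
          · exact mul_le_mul hab.1 hfirst (norm_nonneg _) ((norm_nonneg _).trans hab.1)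
          · exact mul_le_mul hb.1 ih (norm_nonneg _) ((norm_nonneg _).trans hb.1)
      _ = (↑(s.card + 1) * (↑(s.card + 1) - 1) / 2) * (B k * ∏ i ∈ s, B i) * δ ^ 2 := by
          push_cast; ring

end ProductPerturbation

theorem abs_integral_sub_integral_le_mul_totalVariation {E : Type*} [MeasurableSpace E]
    {φ : E → ℝ} (hφ : Measurable φ) {B : ℝ} (hB : ∀ x, |φ x| ≤ B) (μ ν : Measure E)
    [IsFiniteMeasure μ] [IsFiniteMeasure ν] :
    |(∫ x, φ x ∂μ) - ∫ x, φ x ∂ν|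
      ≤ B * ((μ.toSignedMeasure - ν.toSignedMeasure).totalVariation Set.univ).toReal := by
  have hint (ρ : Measure E) [IsFiniteMeasure ρ] : ρ.toSignedMeasure.Integrable φ := by
    rw [VectorMeasure.Integrable, Measure.variation_toSignedMeasure]
    exact .of_bound hφ.aestronglyMeasurable B (.of_forall hB)
  have : IsFiniteMeasure (μ.toSignedMeasure - ν.toSignedMeasure).variation := by
    rw [← SignedMeasure.totalVariation_eq_variation]; infer_instance
  have := VectorMeasure.norm_integral_le_of_norm_le_const (f := φ) (.of_forall hB)
    (μ := μ.toSignedMeasure - ν.toSignedMeasure) (B := (ContinuousLinearMap.lsmul ℝ ℝ).flip)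
  rwa [VectorMeasure.integral_sub_vectorMeasure (hint μ) (hint ν),
    VectorMeasure.integral_toSignedMeasure, VectorMeasure.integral_toSignedMeasure,
    ContinuousLinearMap.opNorm_flip, ContinuousLinearMap.opNorm_lsmul, mul_one,
    ← SignedMeasure.totalVariation_eq_variation] at this

theorem stmt13_general {E : Type*} [MeasurableSpace E] (ℓ : ℕ)
    (φ : Fin ℓ → E → ℝ) (hφm : ∀ i, Measurable (φ i)) (B : Fin ℓ → ℝ)
    (hB : ∀ i x, |φ i x| ≤ B i)
    (f₁ f₂ : Measure E) (hf₁ : IsProbabilityMeasure f₁) (hf₂ : IsProbabilityMeasure f₂) :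
    (|(∏ i, ∫ x, φ i x ∂f₂) - ∏ i, ∫ x, φ i x ∂f₁|
        ≤ (ℓ : ℝ) * (∏ i, B i)
          * ((f₂.toSignedMeasure - f₁.toSignedMeasure).totalVariation Set.univ).toReal) ∧
      (|(∏ i, ∫ x, φ i x ∂f₂) - (∏ i, ∫ x, φ i x ∂f₁)
          - ∑ i, (∏ j ∈ Finset.univ.erase i, ∫ x, φ j x ∂f₁)
              * ((∫ x, φ i x ∂f₂) - ∫ x, φ i x ∂f₁)|
        ≤ ((ℓ : ℝ) * ((ℓ : ℝ) - 1) / 2) * (∏ i, B i)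
          * ((f₂.toSignedMeasure - f₁.toSignedMeasure).totalVariation Set.univ).toReal
            ^ 2) := by
  have hbound (μ : Measure E) [IsProbabilityMeasure μ] (i : Fin ℓ) :
      ‖∫ x, φ i x ∂μ‖ ≤ B i := by
    simpa using norm_integral_le_of_norm_le_const (μ := μ) (f := φ i) (.of_forall (hB i))
  have hdiff (i : Fin ℓ) (_ : i ∈ Finset.univ) :=
    abs_integral_sub_integral_le_mul_totalVariation (hφm i) (hB i) f₂ f₁
  have hfirst := norm_prod_sub_prod_le (fun i _ => hbound f₂ i) (fun i _ => hbound f₁ i) hdiff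
  have hsecond :=
    norm_prod_sub_prod_sub_sum_le (fun i _ => hbound f₂ i) (fun i _ => hbound f₁ i) hdiff
  simp only [Real.norm_eq_abs, Finset.card_univ, Fintype.card_fin] at hfirst hsecond
  exact ⟨hfirst, hsecond⟩

theorem stmt13 {E : Type*} [MeasurableSpace E] (ℓ : ℕ) (hℓ : 1 ≤ ℓ)
    (φ : Fin ℓ → E → ℝ) (hφm : ∀ i, Measurable (φ i)) (B : Fin ℓ → ℝ)
    (hB : ∀ i x, |φ i x| ≤ B i)
    (f₁ f₂ : Measure E) (hf₁ : IsProbabilityMeasure f₁) (hf₂ : IsProbabilityMeasure f₂) :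
    (|(∏ i, ∫ x, φ i x ∂f₂) - ∏ i, ∫ x, φ i x ∂f₁|
        ≤ (ℓ : ℝ) * (∏ i, B i)
          * ((f₂.toSignedMeasure - f₁.toSignedMeasure).totalVariation Set.univ).toReal) ∧
      (|(∏ i, ∫ x, φ i x ∂f₂) - (∏ i, ∫ x, φ i x ∂f₁)
          - ∑ i, (∏ j ∈ Finset.univ.erase i, ∫ x, φ j x ∂f₁)
              * ((∫ x, φ i x ∂f₂) - ∫ x, φ i x ∂f₁)|
        ≤ ((ℓ : ℝ) * ((ℓ : ℝ) - 1) / 2) * (∏ i, B i)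
          * ((f₂.toSignedMeasure - f₁.toSignedMeasure).totalVariation Set.univ).toReal
            ^ 2) :=
  stmt13_general ℓ φ hφm B hB f₁ f₂ hf₁ hf₂
end
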